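/- arXiv:2203.06609 — 6 statements merged into one kernel-verified Lean document; each statement's English description precedes it below -/
import Mathlib

section
/- Let a, b, c > 0 satisfy cosh²a + cosh²b + cosh²c = 2 cosh a cosh b cosh c. Define for r ∈ ℝ: B(r) = cosh b · cosh(ra) − (cosh c − cosh a cosh b)·sinh(ra)/sinh a. Then B(r) > 1 for all r ∈ ℝ, so b_α(r) = cosh⁻¹(B(r)) is well-defined and positive. -/
/-- The quantity B(r) = cosh b cosh(ra) − (cosh c − cosh a cosh b) sinh(ra)/sinh a
along the earthquake about α satisfies B(r) > 1 for all r, so the triangle length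
b_α(r) = cosh⁻¹(B(r)) is well-defined and positive. -/
theorem earthquake_cosh_gt_one (a b c : ℝ) (ha : 0 < a) (hb : 0 < b) (hc : 0 < c)
    (hcollar : Real.cosh a ^ 2 + Real.cosh b ^ 2 + Real.cosh c ^ 2 =
      2 * Real.cosh a * Real.cosh b * Real.cosh c) :
    ∀ r : ℝ,
      1 < Real.cosh b * Real.cosh (r * a) -
        (Real.cosh c - Real.cosh a * Real.cosh b) * Real.sinh (r * a) / Real.sinh a := by
  intro r
  set A := Real.cosh a with hA
  set B := Real.cosh b with hB
  set C := Real.cosh c with hC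
  set s := Real.sinh a with hs
  have hs0 : 0 < s := by rw [hs]; exact Real.sinh_pos_iff.mpr ha
  have hsA : A ^ 2 - s ^ 2 = 1 := by
    simpa [hA, hs] using Real.cosh_sq_sub_sinh_sq a
  have hB1 : 1 < B := by
    have := Real.one_lt_cosh.mpr (ne_of_gt hb)
    simpa [hB] using this
  -- key algebraic identity from the collar equation
  have hkey : (C - A * B) ^ 2 = s ^ 2 * (B ^ 2 - 1) - 1 := by
    nlinarith [hcollar, hsA]
  set K := (C - A * B) / s with hK
  have hK2 : K ^ 2 = B ^ 2 - 1 - 1 / s ^ 2 := by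
    have hs2 : s ^ 2 ≠ 0 := by positivity
    field_simp [hK]
    have hKs : K * s = C - A * B := by rw [hK]; exact div_mul_cancel₀ _ (ne_of_gt hs0)
    linear_combination hkey + (K * s + (C - A * B)) * hKs
  have hKlt : K ^ 2 < B ^ 2 := by
    have h1 : 0 < 1 / s ^ 2 := by positivity
    linarith [hK2]
  set t := r * a with ht
  set ch := Real.cosh t with hch
  set sh := Real.sinh t with hsh
  have hct : ch ^ 2 - sh ^ 2 = 1 := Real.cosh_sq_sub_sinh_sq t
  have hchp : 0 < ch := Real.cosh_pos t
  have hBK1 : 0 < B - K := by nlinarith [hKlt, hB1]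
  have hBK2 : 0 < B + K := by nlinarith [hKlt, hB1]
  have hcs1 : 0 < ch + sh := by
    rw [hch, hsh, Real.cosh_add_sinh]; exact Real.exp_pos t
  have hcs2 : 0 < ch - sh := by
    rw [hch, hsh, Real.cosh_sub_sinh]; exact Real.exp_pos (-t)
  have hpos : 0 < B * ch - K * sh := by
    have hexp : (B - K) * (ch + sh) + (B + K) * (ch - sh) = 2 * (B * ch - K * sh) := by ring
    have h1 := mul_pos hBK1 hcs1
    have h2 := mul_pos hBK2 hcs2
    linarith
  have key : (B * ch - K * sh) ^ 2 - (B * sh - K * ch) ^ 2 = (B ^ 2 - K ^ 2) * (ch ^ 2 - sh ^ 2) := by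
    ring
  rw [hct, mul_one] at key
  have hsq : (B * ch - K * sh) ^ 2 ≥ B ^ 2 - K ^ 2 := by
    linarith [sq_nonneg (B * sh - K * ch)]
  have hgt : 1 < B ^ 2 - K ^ 2 := by
    have h1 : 0 < 1 / s ^ 2 := by positivity
    linarith [hK2]
  have hx2 : 1 < (B * ch - K * sh) ^ 2 := lt_of_lt_of_le hgt hsq
  have hfin : 1 < B * ch - K * sh := by
    by_contra h
    push_neg at h
    have h2 : (B * ch - K * sh) ^ 2 ≤ 1 := pow_le_one₀ (le_of_lt hpos) h
    linarith
  have : B * ch - (C - A * B) * sh / s = B * ch - K * sh := by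
    rw [hK]; ring
  rw [this]
  exact hfin
end

section
/- Let a, b, c > 0 satisfy cosh²a + cosh²b + cosh²c = 2 cosh a cosh b cosh c, and define B(r) = cosh b · cosh(ra) − (cosh c − cosh a cosh b)·sinh(ra)/sinh a for r ∈ ℝ. Then for every r, the triple (a, cosh⁻¹(B(r)), cosh⁻¹(B(r−1))) again satisfies the collar equation: cosh²a + B(r)² + B(r−1)² = 2 cosh a · B(r) · B(r−1). -/
/-- The earthquake flow about α preserves the collar equation: if (a,b,c) satisfies
the collar equation and B(r) is cosh of the b-coordinate at time r, then
cosh²a + B(r)² + B(r−1)² = 2 cosh a · B(r) · B(r−1). -/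
theorem earthquake_preserves_collar (a b c : ℝ) (ha : 0 < a) (hb : 0 < b) (hc : 0 < c)
    (hcollar : Real.cosh a ^ 2 + Real.cosh b ^ 2 + Real.cosh c ^ 2 =
      2 * Real.cosh a * Real.cosh b * Real.cosh c)
    (B : ℝ → ℝ)
    (hB : ∀ r : ℝ, B r = Real.cosh b * Real.cosh (r * a) -
      (Real.cosh c - Real.cosh a * Real.cosh b) * Real.sinh (r * a) / Real.sinh a) :
    ∀ r : ℝ, Real.cosh a ^ 2 + B r ^ 2 + B (r - 1) ^ 2 =
      2 * Real.cosh a * B r * B (r - 1) := by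
  intro r
  have hs : Real.sinh a ≠ 0 := Real.sinh_ne_zero.mpr (ne_of_gt ha)
  set A := Real.cosh a with hA
  set s := Real.sinh a with hsdef
  set P := Real.cosh b with hP
  set C := Real.cosh c with hC
  set x := Real.cosh (r * a) with hx
  set y := Real.sinh (r * a) with hy
  have h1 : x ^ 2 - y ^ 2 = 1 := Real.cosh_sq_sub_sinh_sq (r * a)
  have h2 : A ^ 2 - s ^ 2 = 1 := Real.cosh_sq_sub_sinh_sq a
  set D := C - A * P with hD
  set u := P * x * s - D * y with hu'
  set v := A * u - s * (P * y * s - D * x) with hv'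
  have hu : s * B r = u := by
    rw [hB r]
    field_simp [hu']
    rw [hu', hx, hy]; ring
  have hv : s * B (r - 1) = v := by
    rw [hB (r - 1), show (r - 1) * a = r * a - a by ring, Real.cosh_sub, Real.sinh_sub]
    field_simp [hv', hu']
    ring
  have key : s ^ 2 * (A ^ 2 + B r ^ 2 + B (r - 1) ^ 2) =
      s ^ 2 * (2 * A * B r * B (r - 1)) := by
    linear_combination (s * B r + u - 2 * A * (s * B (r - 1))) * hu +
      (s * B (r - 1) + v - 2 * A * u) * hv + s ^ 2 * hcollar +
      (s ^ 2 * P ^ 2 - u ^ 2) * h2 - s ^ 2 * (P ^ 2 * s ^ 2 - D ^ 2) * h1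
  exact mul_left_cancel₀ (pow_ne_zero 2 hs) key
end

section
/- Let a, b, c > 0 satisfy the collar equation and define B(r) = cosh b · cosh(ra) − (cosh c − cosh a cosh b)·sinh(ra)/sinh a. Then B(0) = cosh b, B(−1) = cosh c, and B(1) = 2 cosh a cosh b − cosh c; in particular, at integer times the earthquake flow about α agrees with the Dehn twist in triangle lengths, whose action on trace coordinates (x,y,z) = (2cosh a, 2cosh b, 2cosh c) is (x, xy − z, y). -/
/-- At integer times the earthquake flow about α agrees with the Dehn twist:
B(0) = cosh b, B(−1) = cosh c, and B(1) = 2 cosh a cosh b − cosh c, matching the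
trace-coordinate action (x,y,z) ↦ (x, xy − z, y) with x = 2cosh a, y = 2cosh b,
z = 2cosh c. -/
theorem earthquake_time_one_is_dehn_twist (a b c : ℝ) (ha : 0 < a) (hb : 0 < b) (hc : 0 < c)
    (hcollar : Real.cosh a ^ 2 + Real.cosh b ^ 2 + Real.cosh c ^ 2 =
      2 * Real.cosh a * Real.cosh b * Real.cosh c)
    (B : ℝ → ℝ)
    (hB : ∀ r : ℝ, B r = Real.cosh b * Real.cosh (r * a) -
      (Real.cosh c - Real.cosh a * Real.cosh b) * Real.sinh (r * a) / Real.sinh a) :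
    B 0 = Real.cosh b ∧ B (-1) = Real.cosh c ∧
    B 1 = 2 * Real.cosh a * Real.cosh b - Real.cosh c ∧
    (2 * Real.cosh a) * (2 * Real.cosh b) - (2 * Real.cosh c) = 2 * B 1 := by
  have hs : Real.sinh a ≠ 0 := ne_of_gt (Real.sinh_pos_iff.2 ha)
  have h0 := hB 0
  have h1 := hB 1
  have hm := hB (-1)
  simp [Real.cosh_zero, Real.sinh_zero, Real.sinh_neg, Real.cosh_neg] at h0 h1 hm
  refine ⟨h0, ?_, ?_, ?_⟩
  · rw [hm]; field_simp; ring
  · rw [h1]; field_simp; ring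
  · rw [h1]; field_simp; ring
end

section
/- Let x > 2 and y, z real with x² + y² + z² = xyz. Define y_α(r) = C₊ S₊ʳ + C₋ S₋ʳ with S± = (x ± √(x²−4))/2 and C± = (y(x²−4) ± (xy−2z)√(x²−4))/(2(x²−4)), and set a = cosh⁻¹(x/2), b = cosh⁻¹(y/2), c = cosh⁻¹(z/2) (assuming y, z > 2). Then for all r ∈ ℝ, y_α(r)/2 = cosh b cosh(ra) − (cosh c − cosh a cosh b)·sinh(ra)/sinh a. That is, the algebraic flow in trace coordinates coincides with the geometric earthquake formula in triangle lengths. -/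
open Real

/-- On the Teichmüller component (x² + y² + z² = xyz, x,y,z > 2), the algebraic
flow y_α(r) = C₊S₊ʳ + C₋S₋ʳ in trace coordinates coincides with the geometric
earthquake formula in triangle lengths, where x = 2cosh a, y = 2cosh b,
z = 2cosh c with a, b, c > 0. -/
theorem trace_flow_eq_triangle_flow (x y z : ℝ) (hx : 2 < x) (hy : 2 < y) (hz : 2 < z)
    (hlevel : x ^ 2 + y ^ 2 + z ^ 2 = x * y * z)
    (a b c : ℝ) (ha : 0 < a) (hb : 0 < b) (hc : 0 < c)
    (hxa : Real.cosh a = x / 2) (hyb : Real.cosh b = y / 2) (hzc : Real.cosh c = z / 2) :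
    ∀ r : ℝ,
      (((y * (x ^ 2 - 4) + (x * y - 2 * z) * Real.sqrt (x ^ 2 - 4)) / (2 * (x ^ 2 - 4)))
          * ((x + Real.sqrt (x ^ 2 - 4)) / 2) ^ r +
        ((y * (x ^ 2 - 4) - (x * y - 2 * z) * Real.sqrt (x ^ 2 - 4)) / (2 * (x ^ 2 - 4)))
          * ((x - Real.sqrt (x ^ 2 - 4)) / 2) ^ r) / 2 =
      Real.cosh b * Real.cosh (r * a) -
        (Real.cosh c - Real.cosh a * Real.cosh b) * Real.sinh (r * a) / Real.sinh a := by
  intro r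
  have hsa : 0 < Real.sinh a := by
    rw [Real.sinh_eq]
    have : Real.exp (-a) < Real.exp a := Real.exp_lt_exp.mpr (by linarith)
    linarith
  have hsq : x ^ 2 - 4 = (2 * Real.sinh a) ^ 2 := by
    have h := Real.cosh_sq_sub_sinh_sq a
    rw [hxa] at h
    nlinarith [h]
  have hs : Real.sqrt (x ^ 2 - 4) = 2 * Real.sinh a := by
    rw [hsq, Real.sqrt_sq (by linarith)]
  have hxe : x = 2 * Real.cosh a := by linarith [hxa]
  have hp : (x + Real.sqrt (x ^ 2 - 4)) / 2 = Real.exp a := by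
    rw [hs, hxe, Real.cosh_eq, Real.sinh_eq]; ring
  have hm : (x - Real.sqrt (x ^ 2 - 4)) / 2 = Real.exp (-a) := by
    rw [hs, hxe, Real.cosh_eq, Real.sinh_eq]; ring
  have hrp : ((x + Real.sqrt (x ^ 2 - 4)) / 2) ^ r = Real.exp (r * a) := by
    rw [hp, Real.rpow_def_of_pos (Real.exp_pos a), Real.log_exp, mul_comm]
  have hrm : ((x - Real.sqrt (x ^ 2 - 4)) / 2) ^ r = Real.exp (-(r * a)) := by
    rw [hm, Real.rpow_def_of_pos (Real.exp_pos (-a)), Real.log_exp]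
    ring_nf
  rw [hrp, hrm, hs, hsq]
  have hye : y = 2 * Real.cosh b := by linarith [hyb]
  have hze : z = 2 * Real.cosh c := by linarith [hzc]
  rw [hxe, hye, hze, Real.cosh_eq (r * a), Real.sinh_eq (r * a), Real.exp_neg]
  have hE : Real.exp (r * a) ≠ 0 := (Real.exp_pos _).ne'
  field_simp
  ring
end

section
/- Let ℓ, τ ∈ ℝ with ℓ > 0, and define ℓ^β(s) and τ^β(s) by cosh(ℓ^β(s)/2) = cosh(ℓ/2)·(cosh(s/2) + sinh(s/2)sinh(τ/2)/sinh(F)) with F = cosh⁻¹(cosh(τ/2)coth(ℓ/2)), and cosh(τ^β(s)/2) = cosh(τ/2)cosh(ℓ/2)tanh(ℓ^β(s)/2), with τ^β(s) ≥ 0. Then τ^β(s)/ℓ^β(s) → 0 as s → ∞. -/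
open Real Filter

theorem aux_sinh_le_cosh (x : ℝ) : |Real.sinh x| ≤ Real.cosh x := by
  rw [abs_le]
  have h1 := Real.exp_pos x
  have h2 := Real.exp_pos (-x)
  rw [Real.sinh_eq, Real.cosh_eq]
  constructor <;> nlinarith

theorem aux_cosh_le_exp (x : ℝ) (hx : 0 ≤ x) : Real.cosh x ≤ Real.exp x := by
  rw [Real.cosh_eq]
  have : Real.exp (-x) ≤ Real.exp x := Real.exp_le_exp.mpr (by linarith)
  linarith

theorem aux_exp_le_two_cosh (x : ℝ) : Real.exp x ≤ 2 * Real.cosh x := by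
  rw [Real.cosh_eq]
  have := (Real.exp_pos (-x)).le
  linarith

/-- The asymptotic slope of the earthquake about β in Fenchel-Nielsen coordinates
is zero: τ^β(s)/ℓ^β(s) → 0 as s → ∞. -/
theorem earthquake_beta_slope_tendsto_zero (ℓ τ : ℝ) (hℓ : 0 < ℓ)
    (F : ℝ) (hF0 : 0 ≤ F)
    (hF : Real.cosh F = Real.cosh (τ / 2) * (Real.cosh (ℓ / 2) / Real.sinh (ℓ / 2)))
    (L : ℝ → ℝ) (hL0 : ∀ s, 0 ≤ L s)
    (hL : ∀ s : ℝ, Real.cosh (L s / 2) =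
      Real.cosh (ℓ / 2) * (Real.cosh (s / 2) +
        Real.sinh (s / 2) * Real.sinh (τ / 2) / Real.sinh F))
    (T : ℝ → ℝ) (hT0 : ∀ s, 0 ≤ T s)
    (hT : ∀ s : ℝ, Real.cosh (T s / 2) =
      Real.cosh (τ / 2) * Real.cosh (ℓ / 2) * Real.tanh (L s / 2)) :
    Tendsto (fun s => T s / L s) atTop (nhds 0) := by
  set A : ℝ := Real.cosh (τ / 2) * Real.cosh (ℓ / 2) with hAdef
  have hcτ := Real.one_le_cosh (τ / 2)
  have hcℓ := Real.one_le_cosh (ℓ / 2)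
  have hsℓ : 0 < Real.sinh (ℓ / 2) := by
    rw [show (0:ℝ) = Real.sinh 0 by simp]
    exact Real.sinh_lt_sinh.mpr (by linarith)
  -- T is bounded by 2*A
  have hTbound : ∀ s, T s ≤ 2 * A := by
    intro s
    have htanh : Real.tanh (L s / 2) ≤ 1 := by
      rw [Real.tanh_eq_sinh_div_cosh]
      rw [div_le_one (Real.cosh_pos _)]
      have := aux_sinh_le_cosh (L s / 2)
      exact (abs_le.mp this).2
    have h1 : Real.cosh (T s / 2) ≤ A := by
      rw [hT s]
      have hApos : (0:ℝ) < A := by nlinarith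
      nlinarith [mul_le_mul_of_nonneg_left htanh hApos.le]
    have h2 : T s / 2 ≤ Real.sinh (T s / 2) := Real.self_le_sinh_iff.mpr (by linarith [hT0 s])
    have h3 := (abs_le.mp (aux_sinh_le_cosh (T s / 2))).2
    linarith
  -- sinh F dominates |sinh (τ/2)|
  have hcoshF : Real.cosh (τ / 2) < Real.cosh F := by
    rw [hF]
    have hcs : Real.sinh (ℓ / 2) < Real.cosh (ℓ / 2) := by
      have := (abs_le.mp (aux_sinh_le_cosh (ℓ / 2))).2
      rcases lt_or_eq_of_le this with h | h
      · exact h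
      · exfalso
        have : Real.cosh (ℓ/2) - Real.sinh (ℓ/2) = Real.exp (-(ℓ/2)) := by
          rw [Real.cosh_eq, Real.sinh_eq]; ring
        have := Real.exp_pos (-(ℓ/2)); linarith
    have : 1 < Real.cosh (ℓ / 2) / Real.sinh (ℓ / 2) := (one_lt_div hsℓ).mpr hcs
    nlinarith
  have habsF : |τ / 2| < F := by
    have h := Real.cosh_lt_cosh.mp hcoshF
    rwa [abs_of_nonneg hF0] at h
  have hsinhF : |Real.sinh (τ / 2)| < Real.sinh F := by
    rcases abs_cases (Real.sinh (τ / 2)) with ⟨h, _⟩ | ⟨h, hneg⟩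
    · rw [h]
      exact Real.sinh_lt_sinh.mpr (lt_of_le_of_lt (le_abs_self _) habsF)
    · rw [h, ← Real.sinh_neg]
      exact Real.sinh_lt_sinh.mpr (lt_of_le_of_lt (neg_le_abs _) habsF)
  have hsFpos : 0 < Real.sinh F := lt_of_le_of_lt (abs_nonneg _) hsinhF
  set c : ℝ := Real.sinh (τ / 2) / Real.sinh F with hcdef
  have hcabs : |c| < 1 := by
    rw [hcdef, abs_div, abs_of_pos hsFpos, div_lt_one hsFpos]
    exact hsinhF
  set K : ℝ := (1 - |c|) / 2 with hKdef
  have hKpos : 0 < K := by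
    have h := abs_nonneg c; simp only [hKdef]; linarith
  -- L grows at least linearly
  have hLlin : ∀ s, s + 2 * Real.log K ≤ L s := by
    intro s
    have hcs2 := aux_sinh_le_cosh (s / 2)
    have hstep : (1 - |c|) * Real.cosh (s / 2) ≤ Real.cosh (s / 2) + Real.sinh (s / 2) * c := by
      have h1 : Real.sinh (s / 2) * c ≥ -(|Real.sinh (s / 2)| * |c|) := by
        rw [← abs_mul]; exact neg_abs_le _
      have h2 : |Real.sinh (s / 2)| * |c| ≤ Real.cosh (s / 2) * |c| :=
        mul_le_mul_of_nonneg_right hcs2 (abs_nonneg _)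
      nlinarith
    have hLval : Real.cosh (ℓ / 2) * (Real.cosh (s / 2) + Real.sinh (s / 2) * c)
        = Real.cosh (L s / 2) := by
      rw [hL s, hcdef]; ring
    have hlow : K * Real.exp (s / 2) ≤ Real.exp (L s / 2) := by
      have e1 : Real.exp (s / 2) ≤ 2 * Real.cosh (s / 2) := aux_exp_le_two_cosh _
      have e2 : Real.cosh (L s / 2) ≤ Real.exp (L s / 2) :=
        aux_cosh_le_exp _ (by linarith [hL0 s])
      have hcpos := Real.cosh_pos (s / 2)
      have f1 : K * Real.exp (s / 2) ≤ K * (2 * Real.cosh (s / 2)) :=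
        mul_le_mul_of_nonneg_left e1 hKpos.le
      have f2 : K * (2 * Real.cosh (s / 2)) = (1 - |c|) * Real.cosh (s / 2) := by
        rw [hKdef]; ring
      have f3 : 0 ≤ Real.cosh (s / 2) + Real.sinh (s / 2) * c :=
        le_trans (by nlinarith [hcabs.le]) hstep
      have f4 : Real.cosh (s / 2) + Real.sinh (s / 2) * c ≤
          Real.cosh (ℓ / 2) * (Real.cosh (s / 2) + Real.sinh (s / 2) * c) :=
        le_mul_of_one_le_left f3 hcℓ
      linarith
    have := Real.log_le_log (by positivity) hlow
    rw [Real.log_exp, Real.log_mul (ne_of_gt hKpos) (ne_of_gt (Real.exp_pos _)),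
      Real.log_exp] at this
    linarith
  have hLtop : Tendsto L atTop atTop :=
    tendsto_atTop_mono hLlin (tendsto_atTop_add_const_right _ _ tendsto_id)
  -- squeeze
  have hg : Tendsto (fun s => 2 * A / L s) atTop (nhds 0) :=
    Tendsto.div_atTop tendsto_const_nhds hLtop
  apply squeeze_zero' (g := fun s => 2 * A / L s)
  · exact Eventually.of_forall fun s => div_nonneg (hT0 s) (hL0 s)
  · filter_upwards [hLtop.eventually_gt_atTop 0] with s hs
    exact div_le_div_of_nonneg_right (hTbound s) hs.le
  · exact hg
end

section
/- Let λ > 0, λ ≠ 1, and let a₁,…,a_k be nonzero reals with a₁a₂⋯a_k > 0. Let M_i ∈ SL₂(ℝ) have entries (a_i, b_i; c_i, d_i), and let D = diag(λ, λ⁻¹). Then tr(Dⁿ M₁ Dⁿ M₂ ⋯ Dⁿ M_k) = λ^{kn} a₁a₂⋯a_k + (lower order terms), and consequently 2 cosh⁻¹(tr(Dⁿ M₁⋯Dⁿ M_k)/2) ∼ n·k·2log λ as n → ∞ (assuming λ > 1), i.e. the hyperbolic length of the n-fold twisted word grows asymptotically like n·k times the length 2 log λ of the twisting geodesic. -/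
open Real Filter Matrix

/-- Inverse hyperbolic cosine, via the logarithm formula. -/
noncomputable def arcosh (x : ℝ) : ℝ := Real.log (x + Real.sqrt (x ^ 2 - 1))

private lemma smul_list_prod' (c : ℝ) (l : List (Matrix (Fin 2) (Fin 2) ℝ)) :
    (l.map fun A => c • A).prod = c ^ l.length • l.prod := by
  induction l with
  | nil => simp
  | cons a l ih =>
      simp only [List.map_cons, List.prod_cons, ih, List.length_cons, smul_mul_smul_comm,
        smul_smul, pow_succ]
      ring_nf

private lemma rowzero (l : List (Matrix (Fin 2) (Fin 2) ℝ)) (hl : l ≠ [])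
    (h : ∀ A ∈ l, A 1 0 = 0 ∧ A 1 1 = 0) :
    l.prod 1 0 = 0 ∧ l.prod 1 1 = 0 ∧ l.prod 0 0 = (l.map fun A => A 0 0).prod := by
  induction l with
  | nil => simp at hl
  | cons a l ih =>
      rcases eq_or_ne l [] with rfl | hne
      · obtain ⟨h1, h2⟩ := h a (by simp)
        simp [h1, h2]
      · obtain ⟨p1, p2, p3⟩ := ih hne (fun A hA => h A (List.mem_cons_of_mem _ hA))
        obtain ⟨h1, h2⟩ := h a (by simp)
        simp only [List.prod_cons, List.map_cons, Matrix.mul_apply, Fin.sum_univ_two,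
          h1, h2, p1, p2, p3]
        refine ⟨by ring, by ring, by ring⟩

private lemma arcosh_eq (x : ℝ) (hx : 1 ≤ x) :
    _root_.arcosh x = Real.log x + Real.log (1 + Real.sqrt (1 - (x⁻¹) ^ 2)) := by
  have hx0 : (0:ℝ) < x := lt_of_lt_of_le one_pos hx
  have key : x ^ 2 * (1 - (x⁻¹) ^ 2) = x ^ 2 - 1 := by field_simp
  have hs : Real.sqrt (x ^ 2 - 1) = x * Real.sqrt (1 - (x⁻¹) ^ 2) := by
    rw [← key, Real.sqrt_mul (by positivity), Real.sqrt_sq hx0.le]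
  have hpos : (0:ℝ) < 1 + Real.sqrt (1 - (x⁻¹) ^ 2) := by positivity
  rw [_root_.arcosh, hs, show x + x * Real.sqrt (1 - (x⁻¹) ^ 2)
      = x * (1 + Real.sqrt (1 - (x⁻¹) ^ 2)) by ring,
    Real.log_mul hx0.ne' hpos.ne']

/-- Trace asymptotics for twisted words: if D = diag(λ, λ⁻¹) with λ > 1 and
M₁, …, M_k ∈ SL₂(ℝ) have nonzero (0,0)-entries a_i with positive product, then
tr(DⁿM₁DⁿM₂⋯DⁿM_k) ∼ λ^{kn} a₁⋯a_k, and the hyperbolic length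
2cosh⁻¹(tr/2) grows like n·k·(2 log λ) as n → ∞. -/
theorem twisted_word_trace_asymptotics (lam : ℝ) (hlam : 1 < lam)
    (k : ℕ) (hk : 0 < k) (M : Fin k → Matrix (Fin 2) (Fin 2) ℝ)
    (hdet : ∀ i, (M i).det = 1)
    (ha : ∀ i, M i 0 0 ≠ 0) (hprod : 0 < ∏ i, M i 0 0)
    (D : Matrix (Fin 2) (Fin 2) ℝ) (hD : D = Matrix.diagonal ![lam, lam⁻¹]) :
    Tendsto (fun n : ℕ =>
        Matrix.trace ((List.ofFn fun i => D ^ n * M i).prod) /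
          (lam ^ (k * n) * ∏ i, M i 0 0)) atTop (nhds 1) ∧
    Tendsto (fun n : ℕ =>
        2 * _root_.arcosh (Matrix.trace ((List.ofFn fun i => D ^ n * M i).prod) / 2) /
          (n * k * (2 * Real.log lam))) atTop (nhds 1) := by
  have hlam0 : (0:ℝ) < lam := lt_trans one_pos hlam
  set P := ∏ i, M i 0 0 with hPdef
  set μ : ℝ := lam⁻¹ * lam⁻¹ with hμdef
  have hμ0 : 0 < μ := by positivity
  have hμ1 : μ < 1 := by
    have h1 : lam⁻¹ < 1 := inv_lt_one_of_one_lt₀ hlam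
    have h2 : 0 < lam⁻¹ := by positivity
    nlinarith
  set g : ℝ → ℝ := fun t =>
    Matrix.trace ((List.ofFn fun i => Matrix.diagonal ![1, t] * M i).prod) with hgdef
  -- continuity of g
  have hgcont : Continuous g := by
    have hdiag : Continuous fun t : ℝ =>
        (Matrix.diagonal ![1, t] : Matrix (Fin 2) (Fin 2) ℝ) := by
      apply continuous_matrix
      intro i j
      fin_cases i <;> fin_cases j <;> simp [Matrix.diagonal] <;> fun_prop
    have hmul : ∀ i : Fin k, Continuous fun t : ℝ => Matrix.diagonal ![1, t] * M i :=
      fun i => hdiag.mul continuous_const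
    have hprodc : Continuous fun t : ℝ =>
        (List.ofFn fun i => Matrix.diagonal ![1, t] * M i).prod := by
      simp only [List.ofFn_eq_map]
      exact continuous_list_prod _ (fun i _ => hmul i)
    exact hprodc.matrix_trace
  -- value of g at 0
  have hg0 : g 0 = P := by
    have hne : (List.ofFn fun i => Matrix.diagonal ![1, (0:ℝ)] * M i) ≠ [] := by
      simp [List.ofFn_eq_nil_iff, hk.ne']
    have hmem : ∀ A ∈ (List.ofFn fun i => Matrix.diagonal ![1, (0:ℝ)] * M i),
        A 1 0 = 0 ∧ A 1 1 = 0 := by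
      intro A hA
      rw [List.mem_ofFn] at hA
      obtain ⟨i, rfl⟩ := hA
      constructor <;> simp [Matrix.diagonal_mul]
    obtain ⟨p1, p2, p3⟩ := rowzero _ hne hmem
    rw [hgdef]
    simp only [Matrix.trace_fin_two, p2, p3, add_zero]
    rw [List.map_ofFn]
    have : (List.ofFn fun i => ((fun A : Matrix (Fin 2) (Fin 2) ℝ => A 0 0) ∘
        fun i => Matrix.diagonal ![1, (0:ℝ)] * M i) i) = List.ofFn fun i => M i 0 0 := by
      congr 1
      funext i
      simp [Matrix.diagonal_mul]
    rw [this, List.prod_ofFn]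
  -- D^n decomposition
  have hkey : ∀ n : ℕ, (lam⁻¹ : ℝ) ^ n = lam ^ n * μ ^ n := by
    intro n
    rw [hμdef, ← mul_pow]
    congr 1
    field_simp
  have hDn : ∀ n : ℕ, D ^ n = lam ^ n • Matrix.diagonal ![1, μ ^ n] := by
    intro n
    rw [hD, Matrix.diagonal_pow]
    ext i j
    fin_cases i <;> fin_cases j <;>
      simp [Matrix.diagonal, Pi.pow_apply, hkey n]
  -- trace identity
  have hT : ∀ n : ℕ, Matrix.trace ((List.ofFn fun i => D ^ n * M i).prod)
      = lam ^ (k * n) * g (μ ^ n) := by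
    intro n
    have heq : (List.ofFn fun i => D ^ n * M i)
        = (List.ofFn fun i => Matrix.diagonal ![1, μ ^ n] * M i).map
            (fun A => lam ^ n • A) := by
      rw [List.map_ofFn]
      congr 1
      funext i
      simp [hDn n, smul_mul_assoc, Function.comp]
    rw [heq, smul_list_prod', Matrix.trace_smul, List.length_ofFn, smul_eq_mul, ← pow_mul,
      Nat.mul_comm n k]
  -- limit of g (μ ^ n)
  have hμn : Tendsto (fun n : ℕ => μ ^ n) atTop (nhds 0) :=
    tendsto_pow_atTop_nhds_zero_of_lt_one hμ0.le hμ1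
  have hf : Tendsto (fun n : ℕ => g (μ ^ n)) atTop (nhds P) := by
    have := (hgcont.tendsto 0).comp hμn
    rw [hg0] at this
    exact this
  constructor
  · -- Part 1
    have heq : (fun n : ℕ => Matrix.trace ((List.ofFn fun i => D ^ n * M i).prod) /
        (lam ^ (k * n) * P)) = fun n => g (μ ^ n) / P := by
      funext n
      rw [hT n, mul_div_mul_left _ _ (pow_ne_zero _ hlam0.ne')]
    rw [heq]
    have := hf.div_const P
    rwa [div_self hprod.ne'] at this
  · -- Part 2
    set L := Real.log lam with hLdef
    have hLpos : 0 < L := Real.log_pos hlam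
    -- T n / 2 → ∞
    have hpowtop : Tendsto (fun n : ℕ => lam ^ (k * n)) atTop atTop := by
      have h1 : (1:ℝ) < lam ^ k := one_lt_pow₀ hlam hk.ne'
      have := tendsto_pow_atTop_atTop_of_one_lt h1
      refine this.congr (fun n => ?_)
      rw [← pow_mul]
    have hTtop : Tendsto (fun n : ℕ => lam ^ (k * n) * g (μ ^ n) / 2) atTop atTop :=
      (hpowtop.atTop_mul_pos hprod hf).atTop_div_const two_pos
    -- error term
    set e : ℕ → ℝ := fun n =>
      _root_.arcosh (lam ^ (k * n) * g (μ ^ n) / 2) - (n : ℝ) * (k : ℝ) * L with hedef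
    have he : Tendsto e atTop (nhds (Real.log P)) := by
      have h1 : Tendsto (fun n : ℕ => Real.log (g (μ ^ n))) atTop (nhds (Real.log P)) :=
        ((Real.continuousAt_log hprod.ne').tendsto).comp hf
      have hinv : Tendsto (fun n : ℕ => (lam ^ (k * n) * g (μ ^ n) / 2)⁻¹)
          atTop (nhds 0) := hTtop.inv_tendsto_atTop
      have hcont : ContinuousAt (fun y : ℝ => Real.log (1 + Real.sqrt (1 - y ^ 2))) 0 := by
        have hin : ContinuousAt (fun y : ℝ => 1 + Real.sqrt (1 - y ^ 2)) 0 := by fun_prop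
        have hne : (1 : ℝ) + Real.sqrt (1 - (0:ℝ) ^ 2) ≠ 0 := by positivity
        have hlog : ContinuousAt Real.log ((fun y : ℝ => 1 + Real.sqrt (1 - y ^ 2)) 0) :=
          Real.continuousAt_log hne
        exact ContinuousAt.comp (g := Real.log)
          (f := fun y : ℝ => 1 + Real.sqrt (1 - y ^ 2)) (x := (0:ℝ)) hlog hin
      have h2 : Tendsto (fun n : ℕ =>
          Real.log (1 + Real.sqrt (1 - ((lam ^ (k * n) * g (μ ^ n) / 2)⁻¹) ^ 2)))
          atTop (nhds (Real.log 2)) := by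
        have := hcont.tendsto.comp hinv
        simp only [Function.comp_def] at this
        convert this using 2
        rw [show (1:ℝ) - 0 ^ 2 = 1 by norm_num, Real.sqrt_one]
        norm_num
      have hlim : Tendsto (fun n : ℕ => Real.log (g (μ ^ n)) - Real.log 2 +
          Real.log (1 + Real.sqrt (1 - ((lam ^ (k * n) * g (μ ^ n) / 2)⁻¹) ^ 2)))
          atTop (nhds (Real.log P)) := by
        have := (h1.sub (tendsto_const_nhds (x := Real.log 2))).add h2
        simpa using this
      refine Tendsto.congr' ?_ hlim
      have hev1 : ∀ᶠ n : ℕ in atTop, (1:ℝ) ≤ lam ^ (k * n) * g (μ ^ n) / 2 :=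
        hTtop.eventually_ge_atTop 1
      have hev2 : ∀ᶠ n : ℕ in atTop, 0 < g (μ ^ n) :=
        hf.eventually (eventually_gt_nhds hprod)
      filter_upwards [hev1, hev2] with n h1n h2n
      show Real.log (g (μ ^ n)) - Real.log 2 +
          Real.log (1 + Real.sqrt (1 - ((lam ^ (k * n) * g (μ ^ n) / 2)⁻¹) ^ 2))
        = _root_.arcosh (lam ^ (k * n) * g (μ ^ n) / 2) - (n : ℝ) * (k : ℝ) * L
      have hTpos : (0:ℝ) < lam ^ (k * n) * g (μ ^ n) := by positivity
      rw [arcosh_eq _ h1n]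
      have hlog : Real.log (lam ^ (k * n) * g (μ ^ n) / 2)
          = (k * n : ℕ) * L + Real.log (g (μ ^ n)) - Real.log 2 := by
        rw [Real.log_div hTpos.ne' two_ne_zero,
          Real.log_mul (by positivity) h2n.ne', Real.log_pow]
      rw [hlog]
      push_cast
      ring
    -- final eventual equality
    have hz : Tendsto (fun n : ℕ => ((n : ℝ) * (k : ℝ) * L)⁻¹) atTop (nhds 0) := by
      apply Tendsto.inv_tendsto_atTop
      have h1 : Tendsto (fun n : ℕ => (n : ℝ) * ((k : ℝ) * L)) atTop atTop :=
        tendsto_natCast_atTop_atTop.atTop_mul_const (by positivity)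
      refine h1.congr fun n => by ring
    have hlim : Tendsto (fun n : ℕ => 1 + e n * ((n : ℝ) * (k : ℝ) * L)⁻¹)
        atTop (nhds 1) := by
      have := (tendsto_const_nhds (x := (1:ℝ))).add (he.mul hz)
      simpa using this
    refine Tendsto.congr' ?_ hlim
    filter_upwards [eventually_ge_atTop 1] with n hn
    have hn0 : (0:ℝ) < (n : ℝ) := by exact_mod_cast hn
    have hk0 : (0:ℝ) < (k : ℝ) := by exact_mod_cast hk
    show 1 + e n * ((n : ℝ) * (k : ℝ) * L)⁻¹
        = 2 * _root_.arcosh (Matrix.trace ((List.ofFn fun i => D ^ n * M i).prod) / 2) /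
            ((n : ℝ) * (k : ℝ) * (2 * L))
    rw [hT n]
    have harc : _root_.arcosh (lam ^ (k * n) * g (μ ^ n) / 2)
        = (n : ℝ) * (k : ℝ) * L + e n := by simp only [hedef]; ring
    rw [harc]
    have h1 := hn0.ne'
    have h2 := hk0.ne'
    have h3 := hLpos.ne'
    field_simp
end
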